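/- There exist constants c > 0 and C > 0 (depending only on k and α) such that the Fourier coefficients a_j = (2π)^{−1/2} ∫_{−π}^{π} Φ̂_k(ξ) e^{ijξ} dξ satisfy |a_j| ≤ C e^{−c|j|} for all j ∈ ℤ. -/

import Mathlib

open MeasureTheory Filter
open scoped ENNReal

noncomputable def S (α : ℝ) (k : ℕ) (ξ : ℝ) : ℝ :=
  ∑' j : ℤ, (((ξ - 2 * Real.pi * j) ^ 2 + α ^ 2) ^ k)⁻¹

noncomputable def Lhat (α : ℝ) (k : ℕ) (ξ : ℝ) : ℝ :=
  (Real.sqrt (2 * Real.pi))⁻¹ * ((ξ ^ 2 + α ^ 2) ^ k)⁻¹ / S α k ξ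

noncomputable def Lk (α : ℝ) (k : ℕ) (x : ℝ) : ℝ :=
  (((Real.sqrt (2 * Real.pi) : ℂ))⁻¹ *
    ∫ ξ : ℝ, (Lhat α k ξ : ℂ) * Complex.exp (Complex.I * x * ξ)).re

noncomputable def Phihat (α : ℝ) (k : ℕ) (ξ : ℝ) : ℝ :=
  (-1 : ℝ) ^ k * (Real.sqrt (2 * Real.pi))⁻¹ / S α k ξ

noncomputable def acoef (α : ℝ) (k : ℕ) (j : ℤ) : ℂ :=
  ((Real.sqrt (2 * Real.pi) : ℂ))⁻¹ *
    ∫ ξ in (-Real.pi)..Real.pi, (Phihat α k ξ : ℂ) * Complex.exp (Complex.I * j * ξ)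

/-!
`S` extends to the `2π`-periodic function `complexS`, holomorphic on the strip `|Im z| < α`
(the series converges locally uniformly there) and positive on the real line. By compactness
`complexS` has no zeros on a closed rectangle `[-π, π] × [-c, c]`, so `Φ̂ₖ` extends holomorphically
to it. Shifting the contour of the Fourier integral to the line `Im z = c · sign j` leaves the
integral unchanged, because the vertical sides cancel by periodicity, and on that line
`|e^{ijz}| = e^{-c|j|}`.
-/

open Set Complex Function

open scoped Real

theorem Function.Periodic.intervalIntegral_add_mul_I_eq {E : Type*} [NormedAddCommGroup E]
    [NormedSpace ℂ E] {f : ℂ → E} {T : ℝ}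
    (hf : Periodic f T) (a d : ℝ)
    (hd : DifferentiableOn ℂ f (uIcc a (a + T) ×ℂ uIcc 0 d)) :
    ∫ x in a..a + T, f (x + d * I) = ∫ x in a..a + T, f x := by
  have hrect := integral_boundary_rect_eq_zero_of_differentiableOn f a (↑(a + T) + d * I)
    (by simpa using hd)
  have hsides : ∀ y : ℝ, f (↑(a + T) + y * I) = f (a + y * I) := fun y => by
    rw [← hf (a + y * I)]; push_cast; ring_nf
  simp only [ofReal_re, ofReal_im, add_re, add_im, mul_re, mul_im, I_re, I_im,
    mul_zero, mul_one, sub_zero, add_zero, zero_add, hsides] at hrect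
  rw [add_sub_cancel_right] at hrect
  simpa using (sub_eq_zero.1 hrect).symm

theorem exists_Icc_reProdIm_subset_of_isOpen {V : Set ℂ} (hV : IsOpen V) {a b : ℝ}
    (h : ∀ x ∈ Icc a b, (x : ℂ) ∈ V) : ∃ c > 0, Icc a b ×ℂ Icc (-c) c ⊆ V := by
  obtain ⟨c, hc, hsub⟩ := (isCompact_Icc.image continuous_ofReal).exists_cthickening_subset_open
    hV (image_subset_iff.2 h)
  refine ⟨c, hc, fun z hz => hsub ?_⟩
  refine Metric.mem_cthickening_of_dist_le z z.re c _ (mem_image_of_mem _ hz.1) ?_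
  rw [dist_of_re_eq (by simp), ofReal_im, Real.dist_0_eq_abs]
  exact abs_le.2 hz.2

theorem Function.Periodic.exists_norm_integral_mul_exp_le {g : ℂ → ℂ} (hper : Periodic g (2 * π))
    {c : ℝ} (hc : 0 ≤ c) (hg : DifferentiableOn ℂ g (Icc (-π) π ×ℂ Icc (-c) c)) :
    ∃ C > 0, ∀ j : ℤ,
      ‖∫ x in -π..π, g x * exp (I * j * x)‖ ≤ C * Real.exp (-c * |(j : ℝ)|) := by
  obtain ⟨M, hM⟩ := (isCompact_Icc.reProdIm isCompact_Icc).exists_bound_of_continuousOn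
    hg.continuousOn
  refine ⟨(|M| + 1) * (2 * π), by positivity, fun j => ?_⟩
  set d : ℝ := c * SignType.sign (j : ℝ)
  have hjd : (j : ℝ) * d = c * |(j : ℝ)| := by
    rw [← self_mul_sign (j : ℝ)]; ring
  have hd : |d| ≤ c := by
    rcases lt_trichotomy (j : ℝ) 0 with h | h | h <;> simp [d, h, abs_of_nonneg hc, hc]
  clear_value d
  have hper' : Periodic (fun z => g z * exp (I * j * z)) ((2 * π : ℝ) : ℂ) := fun z => by
    push_cast
    rw [hper z, mul_add, exp_add, show I * j * (2 * π) = j * (2 * π * I) by ring,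
      exp_int_mul_two_pi_mul_I, mul_one]
  have hdiff : DifferentiableOn ℂ (fun z => g z * exp (I * j * z))
      (uIcc (-π) (-π + 2 * π) ×ℂ uIcc 0 d) := by
    rw [show -π + 2 * π = π by ring, uIcc_of_le (by linarith [Real.pi_pos])]
    refine (hg.mono (reProdIm_subset_iff.2 (prod_mono le_rfl fun y hy => ?_))).mul (by fun_prop)
    rcases mem_uIcc.1 hy with h | h <;> constructor <;> linarith [abs_le.1 hd]
  have hshift := hper'.intervalIntegral_add_mul_I_eq (-π) d hdiff
  rw [show -π + 2 * π = π by ring] at hshift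
  rw [← hshift]
  calc ‖∫ x in -π..π, g (x + d * I) * exp (I * j * (x + d * I))‖
      ≤ (|M| + 1) * Real.exp (-c * |(j : ℝ)|) * |π - -π| := by
        refine intervalIntegral.norm_integral_le_of_norm_le_const fun x hx => ?_
        rw [uIoc_of_le (by linarith [Real.pi_pos])] at hx
        have hnorm : ‖exp (I * j * (x + d * I))‖ = Real.exp (-c * |(j : ℝ)|) := by
          rw [norm_exp]; congr 1; simpa using hjd
        rw [norm_mul, hnorm]
        gcongr
        have := le_abs_self M
        refine (hM _ ⟨?_, ?_⟩).trans (by linarith)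
        · simpa using Ioc_subset_Icc_self hx
        · simpa using abs_le.1 hd
    _ = (|M| + 1) * (2 * π) * Real.exp (-c * |(j : ℝ)|) := by
        rw [show π - -π = 2 * π by ring, abs_of_pos Real.two_pi_pos]; ring

theorem le_sub_two_pi_mul_sq_add {R β x : ℝ} (hβ : 0 < β) (hx : |x| ≤ R) (j : ℤ) :
    β / (R ^ 2 + 1 + β) * (1 + (j : ℝ) ^ 2) ≤ (x - 2 * π * j) ^ 2 + β := by
  have hx2 : x ^ 2 ≤ R ^ 2 := sq_le_sq' (abs_le.1 hx).1 (abs_le.1 hx).2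
  have hπ : 1 ≤ π ^ 2 := by nlinarith [Real.pi_gt_three]
  -- `(2πj)² ≤ 2 (x - 2πj)² + 2 x²`
  have hfar : (j : ℝ) ^ 2 - R ^ 2 ≤ (x - 2 * π * j) ^ 2 := by
    nlinarith [sq_nonneg (2 * π * j - 2 * x), mul_le_mul_of_nonneg_right hπ (sq_nonneg (j : ℝ))]
  rw [div_mul_eq_mul_div, div_le_iff₀ (by positivity)]
  nlinarith [sq_nonneg (x - 2 * π * j), sq_nonneg R]

theorem summable_inv_mul_one_add_sq_pow {ε : ℝ} (hε : 0 < ε) {k : ℕ} (hk : 1 ≤ k) :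
    Summable fun j : ℤ => ((ε * (1 + (j : ℝ) ^ 2)) ^ k)⁻¹ := by
  refine ((Real.summable_one_div_int_pow.2 (by omega : 1 < 2 * k)).mul_left (ε ^ k)⁻¹
    ).of_norm_bounded_eventually ?_
  filter_upwards [eventually_cofinite_ne 0] with j hj
  rw [Real.norm_of_nonneg (by positivity), mul_pow, mul_inv, pow_mul, one_div]
  gcongr
  linarith

theorem S_summable {α : ℝ} (hα : α ≠ 0) {k : ℕ} (hk : 1 ≤ k) (ξ : ℝ) :
    Summable fun j : ℤ => (((ξ - 2 * π * j) ^ 2 + α ^ 2) ^ k)⁻¹ := by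
  have hβ : 0 < α ^ 2 := by positivity
  refine (summable_inv_mul_one_add_sq_pow (by positivity : 0 < α ^ 2 / (|ξ| ^ 2 + 1 + α ^ 2))
    hk).of_nonneg_of_le (fun j => by positivity) fun j => ?_
  gcongr
  exact le_sub_two_pi_mul_sq_add hβ le_rfl j

theorem S_pos {α : ℝ} (hα : α ≠ 0) {k : ℕ} (hk : 1 ≤ k) (ξ : ℝ) : 0 < S α k ξ :=
  (S_summable hα hk ξ).tsum_pos (fun j => by positivity) 0 (by positivity)

noncomputable def complexS (α : ℝ) (k : ℕ) (z : ℂ) : ℂ :=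
  ∑' j : ℤ, (((z - 2 * π * j) ^ 2 + (α : ℂ) ^ 2) ^ k)⁻¹

theorem complexS_ofReal (α : ℝ) (k : ℕ) (ξ : ℝ) : complexS α k ξ = S α k ξ := by
  rw [S, ofReal_tsum]
  push_cast
  rfl

theorem complexS_periodic (α : ℝ) (k : ℕ) : Periodic (complexS α k) (2 * π) := fun z => by
  rw [complexS, complexS, ← (Equiv.addRight (1 : ℤ)).tsum_eq]
  congr! 4 with j
  simp only [Equiv.coe_addRight]
  push_cast
  ring

theorem le_norm_sub_two_pi_mul_sq_add {α R b : ℝ} (hb : b < α) {z : ℂ} (hre : |z.re| ≤ R)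
    (him : |z.im| ≤ b) (j : ℤ) :
    (α ^ 2 - b ^ 2) / (R ^ 2 + 1 + (α ^ 2 - b ^ 2)) * (1 + (j : ℝ) ^ 2)
      ≤ ‖(z - 2 * π * j) ^ 2 + (α : ℂ) ^ 2‖ := by
  have hb0 := (abs_nonneg _).trans him
  refine (le_sub_two_pi_mul_sq_add (by nlinarith) hre j).trans ?_
  refine le_trans ?_ (re_le_norm _)
  have : z.im ^ 2 ≤ b ^ 2 := by simpa using sq_le_sq' (abs_le.1 him).1 (abs_le.1 him).2
  simp only [add_re, sub_re, sub_im, pow_two, mul_re, mul_im, ofReal_re, ofReal_im,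
    intCast_re, intCast_im, re_ofNat, im_ofNat]
  nlinarith

theorem differentiableOn_complexS {α : ℝ} {k : ℕ} (hk : 1 ≤ k) :
    DifferentiableOn ℂ (complexS α k) (im ⁻¹' Ioo (-α) α) := by
  intro z hz
  obtain ⟨b, hzb, hb⟩ := exists_between (abs_lt.2 hz)
  obtain ⟨R, hzR⟩ := exists_gt |z.re|
  have hε : 0 < (α ^ 2 - b ^ 2) / (R ^ 2 + 1 + (α ^ 2 - b ^ 2)) := by
    have : 0 < α ^ 2 - b ^ 2 := by nlinarith [abs_nonneg z.im]
    positivity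
  have hlow : ∀ (j : ℤ), ∀ w ∈ Ioo (-R) R ×ℂ Ioo (-b) b, _ ≤ _ := fun j w hw =>
    le_norm_sub_two_pi_mul_sq_add hb (abs_le.2 ⟨hw.1.1.le, hw.1.2.le⟩)
      (abs_le.2 ⟨hw.2.1.le, hw.2.2.le⟩) j
  have hU : IsOpen (Ioo (-R) R ×ℂ Ioo (-b) b) := isOpen_Ioo.reProdIm isOpen_Ioo
  refine (differentiableOn_tsum_of_summable_norm (summable_inv_mul_one_add_sq_pow hε hk)
    (fun j => ?_) hU fun j w hw => ?_).differentiableAt (hU.mem_nhds ?_) |>.differentiableWithinAt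
  · refine DifferentiableOn.inv (by fun_prop) fun w hw => pow_ne_zero _ ?_
    exact norm_pos_iff.1 ((mul_pos hε (by positivity)).trans_le (hlow j w hw))
  · rw [norm_inv, norm_pow]
    gcongr
    exact hlow j w hw
  · exact ⟨abs_lt.1 hzR, abs_lt.1 hzb⟩

theorem acoef_eq_integral (α : ℝ) (k : ℕ) (j : ℤ) :
    acoef α k j = ((Real.sqrt (2 * π) : ℂ))⁻¹ * ∫ x in -π..π,
      (-1) ^ k * ((Real.sqrt (2 * π) : ℂ))⁻¹ / complexS α k x * exp (I * j * x) := by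
  simp only [acoef, Phihat, complexS_ofReal]
  push_cast
  rfl

/-- The Fourier coefficients of Φ̂ₖ decay exponentially. -/
theorem stmt_2 (α : ℝ) (hα : 0 < α) (k : ℕ) (hk : 1 ≤ k) :
    ∃ c > (0 : ℝ), ∃ C > (0 : ℝ), ∀ j : ℤ,
      ‖acoef α k j‖ ≤ C * Real.exp (-c * |(j : ℝ)|) := by
  have hopen : IsOpen (im ⁻¹' Ioo (-α) α ∩ complexS α k ⁻¹' {0}ᶜ) :=
    (differentiableOn_complexS hk).continuousOn.isOpen_inter_preimage
      (isOpen_Ioo.preimage continuous_im) isOpen_compl_singleton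
  obtain ⟨c, hc, hsub⟩ := exists_Icc_reProdIm_subset_of_isOpen hopen fun x _ =>
    ⟨by simpa using hα, by simpa [complexS_ofReal] using (S_pos hα.ne' hk x).ne'⟩
  have hdiff : DifferentiableOn ℂ
      (fun z => (-1) ^ k * ((Real.sqrt (2 * π) : ℂ))⁻¹ / complexS α k z)
      (Icc (-π) π ×ℂ Icc (-c) c) :=
    (differentiableOn_const _).div ((differentiableOn_complexS hk).mono fun z hz => (hsub hz).1)
      fun z hz => (hsub hz).2
  obtain ⟨C, hC, hdecay⟩ := Periodic.exists_norm_integral_mul_exp_le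
    ((complexS_periodic α k).comp _) hc.le hdiff
  refine ⟨c, hc, (Real.sqrt (2 * π))⁻¹ * C, by positivity, fun j => ?_⟩
  rw [acoef_eq_integral, norm_mul, norm_inv, norm_real, Real.norm_of_nonneg (by positivity),
    mul_assoc]
  gcongr
  exact hdecay j
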